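/- Let ψ ∈ ℂ^m⊗ℂ^n and φ ∈ ℂ^u⊗ℂ^v be unit vectors with Schmidt decompositions ψ = Σ_i λ_i (a_i ⊗ b_i) and φ = Σ_j μ_j (c_j ⊗ d_j), where (a_i), (b_i), (c_j), (d_j) are orthonormal families and λ_i, μ_j ≥ 0 with Σ_i λ_i² = Σ_j μ_j² = 1. Set ρ_AB = ψψ† and ρ_CD = φφ†. Then N_H^b(ρ_AB⊗ρ_CD) = 1 − Σ_{i,j} λ_i⁴ μ_j⁴. -/

import Mathlib

open scoped Matrix Kronecker BigOperators ComplexOrder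
open Matrix

/-- The positive-semidefinite square root of a PSD matrix (0 if not PSD). -/
noncomputable def psdSqrt {N : Type*} [Fintype N] [DecidableEq N] (A : Matrix N N ℂ) :
    Matrix N N ℂ :=
  open scoped Classical in
  if h : A.PosSemidef then
    (h.1.eigenvectorUnitary : Matrix N N ℂ) *
      diagonal (((↑) : ℝ → ℂ) ∘ Real.sqrt ∘ h.1.eigenvalues) *
      (star h.1.eigenvectorUnitary : Matrix N N ℂ) else 0

/-- Squared Frobenius (Hilbert–Schmidt) norm: `‖X‖² = tr (Xᴴ X)`. -/
noncomputable def hsNormSq {N : Type*} [Fintype N] (X : Matrix N N ℂ) : ℝ :=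
  (Matrix.trace (Xᴴ * X)).re

/-- A density matrix: positive semidefinite with unit trace. -/
def IsDensity {N : Type*} [Fintype N] [DecidableEq N] (ρ : Matrix N N ℂ) : Prop :=
  ρ.PosSemidef ∧ ρ.trace = 1

/-- Standard inner product on `ℂ^N`. -/
noncomputable def cInner {N : Type*} [Fintype N] (x y : N → ℂ) : ℂ :=
  ∑ i, star (x i) * y i

/-- Outer product `ψ ψ†`. -/
noncomputable def outer {N : Type*} (ψ : N → ℂ) : Matrix N N ℂ :=
  Matrix.vecMulVec ψ (star ψ)

/-- The family of unit vectors of a rank-one von Neumann measurement: an orthonormal basis,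
indexed by the dimension. -/
def IsVNM {N : Type*} [Fintype N] [DecidableEq N] (u : N → N → ℂ) : Prop :=
  ∀ a b, cInner (u a) (u b) = if a = b then (1 : ℂ) else 0

/-- The rank-one projection `Π_h = u_h u_h†` of a measurement. -/
noncomputable def projOf {N : Type*} (u : N → N → ℂ) (h : N) : Matrix N N ℂ :=
  outer (u h)

/-- The measurement `{u_h u_h†}` fixes `σ`: `Σ_h Π_h σ Π_h = σ`. -/
def FixesVNM {N : Type*} [Fintype N] (u : N → N → ℂ) (σ : Matrix N N ℂ) : Prop :=
  ∑ h, projOf u h * σ * projOf u h = σ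

/-- Reduced state of the second factor: `(ρ_B)_{j j'} = Σ_i ρ_{(i,j),(i,j')}`. -/
noncomputable def redB {m n : ℕ} (ρ : Matrix (Fin m × Fin n) (Fin m × Fin n) ℂ) :
    Matrix (Fin n) (Fin n) ℂ :=
  Matrix.of fun j j' => ∑ i, ρ (i, j) (i, j')

/-- Reduced state of the first factor: `(ρ_C)_{k k'} = Σ_l ρ_{(k,l),(k',l)}`. -/
noncomputable def redC {u v : ℕ} (ρ : Matrix (Fin u × Fin v) (Fin u × Fin v) ℂ) :
    Matrix (Fin u) (Fin u) ℂ :=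
  Matrix.of fun k k' => ∑ l, ρ (k, l) (k', l)

/-- `I_m ⊗ P ⊗ I_v` acting on the middle two factors. -/
noncomputable def ampMid (m v : ℕ) {n u : ℕ} (P : Matrix (Fin n × Fin u) (Fin n × Fin u) ℂ) :
    Matrix ((Fin m × Fin n) × Fin u × Fin v) ((Fin m × Fin n) × Fin u × Fin v) ℂ :=
  Matrix.of fun p q =>
    (if p.1.1 = q.1.1 then (1 : ℂ) else 0) * P (p.1.2, p.2.1) (q.1.2, q.2.1) *
      (if p.2.2 = q.2.2 then (1 : ℂ) else 0)

/-- The map `Π^{BC}(X) = Σ_h (I_m ⊗ Π_h ⊗ I_v) X (I_m ⊗ Π_h ⊗ I_v)`. -/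
noncomputable def pinchBC {m n u v : ℕ} (w : (Fin n × Fin u) → (Fin n × Fin u) → ℂ)
    (X : Matrix ((Fin m × Fin n) × Fin u × Fin v) ((Fin m × Fin n) × Fin u × Fin v) ℂ) :
    Matrix ((Fin m × Fin n) × Fin u × Fin v) ((Fin m × Fin n) × Fin u × Fin v) ℂ :=
  ∑ h, ampMid m v (projOf w h) * X * ampMid m v (projOf w h)

/-- The measurement-induced nonbilocality `N_H^b(ρ_AB ⊗ ρ_CD)`. -/
noncomputable def NHb {m n u v : ℕ}
    (ρAB : Matrix (Fin m × Fin n) (Fin m × Fin n) ℂ)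
    (ρCD : Matrix (Fin u × Fin v) (Fin u × Fin v) ℂ) : ℝ :=
  sSup { r : ℝ | ∃ w : (Fin n × Fin u) → (Fin n × Fin u) → ℂ,
    IsVNM w ∧ FixesVNM w (redB ρAB ⊗ₖ redC ρCD) ∧
    r = hsNormSq (psdSqrt (ρAB ⊗ₖ ρCD) - pinchBC w (psdSqrt (ρAB ⊗ₖ ρCD))) }

/-!
Since `ψ ⊗ φ` is a unit vector, `P = ρ_AB ⊗ ρ_CD` is a rank-one projection, hence its own square
root. For orthogonal idempotents `Q_h` and Hermitian `A`, `‖A - Σ_h Q_h A Q_h‖² = tr A² -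
tr (A Σ_h Q_h A Q_h)`. With `A = P` of rank one, `tr (P Q_h P Q_h) = tr (Q_h P)²`, and for
`Q_h = I ⊗ Π_h ⊗ I` the partial trace gives `tr (Q_h P) = tr (Π_h σ)` with `σ = ρ_B ⊗ ρ_C`.
Reading the same identity backwards for the rank-one `Π_h`, `Σ_h tr (Π_h σ)² =
tr (σ Σ_h Π_h σ Π_h) = tr σ²` because the measurement fixes `σ`. So every admissible measurement
gives `1 - tr σ² = 1 - Σ_i λ_i⁴ Σ_j μ_j⁴`, and an eigenbasis of `σ` is admissible.
-/

open Finset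

section Vectors

variable {N ι : Type*}

lemma isHermitian_outer (x : N → ℂ) : (outer x).IsHermitian := by
  rw [IsHermitian, outer, conjTranspose_vecMulVec, star_star]

lemma Matrix.IsHermitian.kronecker {M : Type*} {A : Matrix N N ℂ} {B : Matrix M M ℂ}
    (hA : A.IsHermitian) (hB : B.IsHermitian) : (A ⊗ₖ B).IsHermitian := by
  rw [IsHermitian, conjTranspose_kronecker, hA.eq, hB.eq]

lemma outer_kronecker_outer {M : Type*} (x : N → ℂ) (y : M → ℂ) :
    outer x ⊗ₖ outer y = outer (fun p => x p.1 * y p.2) := by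
  ext p q
  simp only [outer, kroneckerMap_apply, vecMulVec_apply, Pi.star_apply, star_mul']
  ring

variable [Fintype N]

lemma cInner_eq_star_dotProduct (x y : N → ℂ) : cInner x y = star x ⬝ᵥ y := rfl

def IsOrthonormalFamily [DecidableEq ι] (b : ι → N → ℂ) : Prop :=
  ∀ i i', cInner (b i) (b i') = if i = i' then (1 : ℂ) else 0

lemma trace_outer (x : N → ℂ) : trace (outer x) = cInner x x := by
  rw [outer, trace_vecMulVec, dotProduct_comm]
  rfl

lemma outer_mul_outer (x y : N → ℂ) : outer x * outer y = cInner x y • vecMulVec x (star y) := by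
  rw [outer, outer, vecMulVec_mul_vecMulVec, vecMulVec_smul]
  rfl

lemma outer_mul_self_of_cInner_self (x : N → ℂ) (hx : cInner x x = 1) :
    outer x * outer x = outer x := by
  rw [outer_mul_outer, hx, one_smul]
  rfl

lemma outer_kronecker_outer_mul_self {M : Type*} [Fintype M] {x : N → ℂ} {y : M → ℂ}
    (hx : cInner x x = 1) (hy : cInner y y = 1) :
    outer x ⊗ₖ outer y * (outer x ⊗ₖ outer y) = outer x ⊗ₖ outer y := by
  rw [← mul_kronecker_mul, outer_mul_self_of_cInner_self x hx, outer_mul_self_of_cInner_self y hy]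

lemma trace_outer_mul_mul_self (x : N → ℂ) (A : Matrix N N ℂ) :
    trace (outer x * A * (outer x * A)) = trace (outer x * A) ^ 2 := by
  simp only [outer, vecMulVec_mul, vecMul_vecMulVec, trace_vecMulVec, dotProduct_smul,
    smul_eq_mul, sq]
  rw [dotProduct_comm _ x]

lemma trace_mul_outer_mul_self (A : Matrix N N ℂ) (x : N → ℂ) :
    trace (A * outer x * (A * outer x)) = trace (A * outer x) ^ 2 := by
  calc trace (A * outer x * (A * outer x)) = trace (outer x * A * (outer x * A)) := by
        rw [mul_assoc, trace_mul_comm]; simp only [mul_assoc]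
    _ = trace (outer x * A) ^ 2 := trace_outer_mul_mul_self x A
    _ = trace (A * outer x) ^ 2 := by rw [trace_mul_comm]

variable [DecidableEq ι] {b : ι → N → ℂ}

lemma IsOrthonormalFamily.outer_mul_outer (hb : IsOrthonormalFamily b) (i i' : ι) :
    outer (b i) * outer (b i') = if i = i' then outer (b i) else 0 := by
  rw [_root_.outer_mul_outer, hb]
  split_ifs with h
  · subst h; rw [one_smul]; rfl
  · rw [zero_smul]

lemma IsOrthonormalFamily.orthogonalIdempotents [DecidableEq N] (hb : IsOrthonormalFamily b) :
    OrthogonalIdempotents fun i => outer (b i) :=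
  OrthogonalIdempotents.iff_mul_eq.mpr hb.outer_mul_outer

variable [Fintype ι]

lemma IsOrthonormalFamily.sum_smul_outer_mul_self (hb : IsOrthonormalFamily b) (c : ι → ℂ) :
    (∑ i, c i • outer (b i)) * (∑ i, c i • outer (b i)) = ∑ i, c i ^ 2 • outer (b i) := by
  simp only [sum_mul, mul_sum, smul_mul_smul_comm, hb.outer_mul_outer, smul_ite, smul_zero,
    sum_ite_eq', mem_univ, if_true, sq]

lemma IsOrthonormalFamily.trace_sum_smul_outer (hb : IsOrthonormalFamily b) (c : ι → ℂ) :
    trace (∑ i, c i • outer (b i)) = ∑ i, c i := by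
  simp only [trace_sum, trace_smul, trace_outer, fun i => hb i i, if_true, smul_eq_mul, mul_one]

lemma IsOrthonormalFamily.cInner_sum_smul (hb : IsOrthonormalFamily b) (c c' : ι → ℂ) :
    cInner (∑ i, c i • b i) (∑ i, c' i • b i) = ∑ i, star (c i) * c' i := by
  rw [cInner_eq_star_dotProduct]
  simp only [star_sum, star_smul, sum_dotProduct, dotProduct_sum, smul_dotProduct,
    dotProduct_smul, ← cInner_eq_star_dotProduct, hb _ _, smul_eq_mul, mul_ite, mul_one,
    mul_zero, sum_ite_eq', mem_univ, if_true]
  exact sum_congr rfl fun i _ => mul_comm _ _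

end Vectors

section ReducedStates

variable {m n : ℕ}

lemma isHermitian_redB {ρ : Matrix (Fin m × Fin n) (Fin m × Fin n) ℂ} (hρ : ρ.IsHermitian) :
    (redB ρ).IsHermitian := by
  ext j j'
  simp only [redB, conjTranspose_apply, of_apply, star_sum]
  exact sum_congr rfl fun i _ => hρ.apply _ _

lemma trace_redB (ρ : Matrix (Fin m × Fin n) (Fin m × Fin n) ℂ) : trace (redB ρ) = trace ρ := by
  simp only [trace, Matrix.diag, redB, of_apply, Fintype.sum_prod_type]
  exact sum_comm

lemma redC_eq_redB_submatrix (ρ : Matrix (Fin m × Fin n) (Fin m × Fin n) ℂ) :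
    redC ρ = redB (ρ.submatrix Prod.swap Prod.swap) := rfl

lemma isHermitian_redC {ρ : Matrix (Fin m × Fin n) (Fin m × Fin n) ℂ} (hρ : ρ.IsHermitian) :
    (redC ρ).IsHermitian := by
  rw [redC_eq_redB_submatrix]
  exact isHermitian_redB (hρ.submatrix _)

lemma trace_redC (ρ : Matrix (Fin m × Fin n) (Fin m × Fin n) ℂ) : trace (redC ρ) = trace ρ := by
  rw [redC_eq_redB_submatrix, trace_redB]
  exact (Equiv.prodComm _ _).sum_comp fun p => ρ p p

variable {ι : Type*} [Fintype ι] [DecidableEq ι]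

lemma redB_outer_of_schmidt {ψ : Fin m × Fin n → ℂ} {lam : ι → ℝ} {a : ι → Fin m → ℂ}
    {b : ι → Fin n → ℂ} (ha : IsOrthonormalFamily a)
    (hψ : ψ = fun p => ∑ i, (lam i : ℂ) * a i p.1 * b i p.2) :
    redB (outer ψ) = ∑ i, ((lam i : ℂ) ^ 2) • outer (b i) := by
  have hcol : ∀ j, (fun x => ψ (x, j)) = ∑ i, ((lam i : ℂ) * b i j) • a i := fun j => by
    ext x
    simp only [hψ, Finset.sum_apply, Pi.smul_apply, smul_eq_mul]
    exact sum_congr rfl fun i _ => by ring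
  ext j j'
  calc redB (outer ψ) j j' = cInner (fun x => ψ (x, j')) (fun x => ψ (x, j)) := by
        simp only [redB, outer, cInner, of_apply, vecMulVec_apply, Pi.star_apply, mul_comm]
    _ = _ := by
        rw [hcol, hcol, ha.cInner_sum_smul]
        simp only [Matrix.sum_apply, Matrix.smul_apply, outer, vecMulVec_apply, Pi.star_apply,
          star_mul', Complex.star_def, Complex.conj_ofReal, smul_eq_mul]
        exact sum_congr rfl fun i _ => by ring

lemma redC_outer_of_schmidt {φ : Fin m × Fin n → ℂ} {mu : ι → ℝ} {c : ι → Fin m → ℂ}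
    {d : ι → Fin n → ℂ} (hd : IsOrthonormalFamily d)
    (hφ : φ = fun p => ∑ j, (mu j : ℂ) * c j p.1 * d j p.2) :
    redC (outer φ) = ∑ j, ((mu j : ℂ) ^ 2) • outer (c j) :=
  redB_outer_of_schmidt hd (ψ := φ ∘ Prod.swap) (by
    rw [hφ]; ext p; exact sum_congr rfl fun j _ => mul_right_comm _ _ _)

end ReducedStates

section Measurements

variable {N : Type*} [Fintype N] [DecidableEq N] {w : N → N → ℂ}

lemma IsVNM.sum_projOf_eq_one (hw : IsVNM w) : ∑ h, projOf w h = 1 := by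
  let V : Matrix N N ℂ := of fun h i => star (w h i)
  have hVV : V * Vᴴ = 1 := by
    ext h h'
    simpa [V, mul_apply, one_apply, cInner] using hw h h'
  have hVV' : Vᴴ * V = 1 := mul_eq_one_comm.mp hVV
  ext i j
  simpa [V, mul_apply, Matrix.sum_apply, projOf, outer, vecMulVec_apply] using congr_fun₂ hVV' i j

lemma fixesVNM_of_mulVec_eq_smul (hw : IsVNM w) {σ : Matrix N N ℂ} {γ : N → ℂ}
    (hσw : ∀ h, σ *ᵥ w h = γ h • w h) : FixesVNM w σ := by
  have hσP : ∀ h, σ * projOf w h = γ h • projOf w h := fun h => by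
    rw [projOf, outer, mul_vecMulVec, hσw, smul_vecMulVec]
  have hσ : σ = ∑ h, γ h • projOf w h := by
    rw [← sum_congr rfl fun h _ => hσP h, ← mul_sum, hw.sum_projOf_eq_one, mul_one]
  calc ∑ h, projOf w h * σ * projOf w h = ∑ h, γ h • (projOf w h * projOf w h) := by
        simp only [mul_assoc, hσP, mul_smul_comm]
    _ = σ := by
        rw [hσ]
        exact sum_congr rfl fun h _ => by
          rw [projOf, IsOrthonormalFamily.outer_mul_outer hw, if_pos rfl]

lemma exists_isVNM_fixesVNM {σ : Matrix N N ℂ} (hσ : σ.IsHermitian) :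
    ∃ w : N → N → ℂ, IsVNM w ∧ FixesVNM w σ := by
  let w : N → N → ℂ := fun h => hσ.eigenvectorBasis h
  have hw : IsVNM w := fun g g' => by
    simpa [cInner, w, PiLp.inner_apply, RCLike.inner_apply, mul_comm] using
      orthonormal_iff_ite.mp hσ.eigenvectorBasis.orthonormal g g'
  refine ⟨w, hw, fixesVNM_of_mulVec_eq_smul hw (γ := fun h => hσ.eigenvalues h) fun h => ?_⟩
  ext i
  simpa [w, Complex.real_smul] using congr_fun (hσ.mulVec_eigenvectorBasis h) i

end Measurements

section SquareRoot

variable {N : Type*} [Fintype N] [DecidableEq N]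

lemma psdSqrt_eq_cfc {A : Matrix N N ℂ} (hA : A.PosSemidef) : psdSqrt A = cfc Real.sqrt A := by
  rw [psdSqrt, dif_pos hA, hA.1.cfc_eq, IsHermitian.cfc, Unitary.conjStarAlgAut_apply]
  rfl

lemma psdSqrt_eq_self_of_mul_self {A : Matrix N N ℂ} (hA : A.PosSemidef) (hAA : A * A = A) :
    psdSqrt A = A := by
  have hsa : IsSelfAdjoint A := hA.1
  have hsq : (spectrum ℝ A).EqOn (fun x => x ^ 2) id :=
    eqOn_of_cfc_eq_cfc (by rw [cfc_pow_id A 2, cfc_id ℝ A, sq, hAA])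
  rw [psdSqrt_eq_cfc hA]
  conv_rhs => rw [← cfc_id ℝ A]
  refine cfc_congr fun x hx => ?_
  have hx2 : x ^ 2 = x := hsq hx
  calc √x = √(x ^ 2) := by rw [hx2]
    _ = x := Real.sqrt_sq (hx2 ▸ sq_nonneg x)

end SquareRoot

section Pinching

variable {N H R : Type*} [Fintype N] [Fintype H] [CommRing R]

def pinching (Q : H → Matrix N N R) (A : Matrix N N R) : Matrix N N R :=
  ∑ h, Q h * A * Q h

lemma trace_mul_pinching (Q : H → Matrix N N R) (A : Matrix N N R) :
    trace (A * pinching Q A) = ∑ h, trace (Q h * A * (Q h * A)) := by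
  simp only [pinching, mul_sum, trace_sum]
  exact sum_congr rfl fun h _ => by rw [trace_mul_comm, mul_assoc (Q h * A)]

lemma OrthogonalIdempotents.trace_pinching_mul_pinching [DecidableEq N] [DecidableEq H]
    {Q : H → Matrix N N R} (hQ : OrthogonalIdempotents Q) (A : Matrix N N R) :
    trace (pinching Q A * pinching Q A) = trace (A * pinching Q A) := by
  have hterm : ∀ h h', Q h * A * Q h * (Q h' * A * Q h') =
      if h = h' then Q h * A * Q h * A * Q h else 0 := fun h h' => by
    rw [show Q h * A * Q h * (Q h' * A * Q h') = Q h * A * (Q h * Q h') * A * Q h' by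
      simp only [mul_assoc], hQ.mul_eq]
    split_ifs with hh
    · rw [hh]
    · simp
  rw [trace_mul_pinching, pinching, sum_mul]
  simp only [mul_sum, hterm, sum_ite_eq, mem_univ, if_true]
  rw [trace_sum]
  refine sum_congr rfl fun h _ => ?_
  rw [trace_mul_comm, show Q h * (Q h * A * Q h * A) = Q h * Q h * A * Q h * A by
    simp only [mul_assoc], (hQ.idem h).eq]
  simp only [mul_assoc]

lemma conjTranspose_pinching [StarRing R] {Q : H → Matrix N N R} (hQ : ∀ h, (Q h).IsHermitian)
    (A : Matrix N N R) : (pinching Q A)ᴴ = pinching Q Aᴴ := by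
  simp only [pinching, conjTranspose_sum, conjTranspose_mul, (hQ _).eq, mul_assoc]

end Pinching

lemma hsNormSq_sub_pinching {N H : Type*} [Fintype N] [DecidableEq N] [Fintype H]
    [DecidableEq H] {Q : H → Matrix N N ℂ} (hQ : OrthogonalIdempotents Q)
    (hQh : ∀ h, (Q h).IsHermitian) {A : Matrix N N ℂ} (hA : A.IsHermitian) :
    hsNormSq (A - pinching Q A) = (trace (A * A) - trace (A * pinching Q A)).re := by
  rw [hsNormSq, conjTranspose_sub, conjTranspose_pinching hQh, hA.eq]
  simp only [sub_mul, mul_sub, trace_sub, hQ.trace_pinching_mul_pinching,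
    trace_mul_comm (pinching Q A) A]
  ring_nf

section Amplification

variable {m n u v : ℕ}

def midEquiv (m n u v : ℕ) : (Fin m × Fin n) × Fin u × Fin v ≃ (Fin n × Fin u) × Fin m × Fin v where
  toFun r := ((r.1.2, r.2.1), (r.1.1, r.2.2))
  invFun z := ((z.2.1, z.1.1), (z.1.2, z.2.2))
  left_inv _ := rfl
  right_inv _ := rfl

lemma ampMid_eq_submatrix_kronecker (P : Matrix (Fin n × Fin u) (Fin n × Fin u) ℂ) :
    ampMid m v P = (P ⊗ₖ (1 : Matrix (Fin m × Fin v) (Fin m × Fin v) ℂ)).submatrix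
      (midEquiv m n u v) (midEquiv m n u v) := by
  ext p q
  simp only [ampMid, of_apply, submatrix_apply, kroneckerMap_apply, midEquiv, Equiv.coe_fn_mk,
    one_apply, Prod.mk.injEq, ite_and]
  split_ifs <;> ring

lemma ampMid_mul (P P' : Matrix (Fin n × Fin u) (Fin n × Fin u) ℂ) :
    ampMid m v (P * P') = ampMid m v P * ampMid m v P' := by
  simp only [ampMid_eq_submatrix_kronecker, submatrix_mul_equiv, ← mul_kronecker_mul, mul_one]

lemma isHermitian_ampMid {P : Matrix (Fin n × Fin u) (Fin n × Fin u) ℂ} (hP : P.IsHermitian) :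
    (ampMid m v P).IsHermitian := by
  rw [IsHermitian, ampMid_eq_submatrix_kronecker, conjTranspose_submatrix, conjTranspose_kronecker,
    hP.eq, conjTranspose_one]

lemma OrthogonalIdempotents.ampMid {H : Type*} [DecidableEq H]
    {Q : H → Matrix (Fin n × Fin u) (Fin n × Fin u) ℂ} (hQ : OrthogonalIdempotents Q) :
    OrthogonalIdempotents fun h => _root_.ampMid m v (Q h) := by
  refine OrthogonalIdempotents.iff_mul_eq.mpr fun h h' => ?_
  rw [← ampMid_mul, hQ.mul_eq]
  split_ifs
  · rfl
  · ext p q; simp [_root_.ampMid]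

lemma trace_ampMid_mul_kronecker (X : Matrix (Fin n × Fin u) (Fin n × Fin u) ℂ)
    (ρ : Matrix (Fin m × Fin n) (Fin m × Fin n) ℂ) (ρ' : Matrix (Fin u × Fin v) (Fin u × Fin v) ℂ) :
    trace (ampMid m v X * (ρ ⊗ₖ ρ')) = trace (X * (redB ρ ⊗ₖ redC ρ')) := by
  simp only [trace, Matrix.diag, mul_apply, ampMid, redB, redC, kroneckerMap_apply, of_apply,
    Fintype.sum_prod_type, ite_mul, one_mul, zero_mul, mul_ite, mul_zero, sum_ite_eq,
    mem_univ, if_true, sum_mul, mul_sum, sum_ite_irrel, sum_const_zero]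
  -- reorder the summations `i j k l j' k'` on the left into `j k j' k' l i`, as on the right
  conv_lhs => rw [sum_comm]
  refine sum_congr rfl fun j _ => ?_
  conv_lhs => rw [sum_comm]
  refine sum_congr rfl fun k _ => ?_
  conv_rhs => enter [2, j', 2, k']; rw [sum_comm]
  conv_lhs => enter [2, i]; rw [sum_comm]; enter [2, j']; rw [sum_comm]
  conv_lhs => rw [sum_comm]
  refine sum_congr rfl fun j' _ => ?_
  conv_lhs => rw [sum_comm]
  refine sum_congr rfl fun k' _ => sum_congr rfl fun i _ => sum_congr rfl fun l _ => ?_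
  ring

end Amplification

theorem hsNormSq_kronecker_outer_sub_pinchBC {m n u v : ℕ} {ψ : Fin m × Fin n → ℂ}
    {φ : Fin u × Fin v → ℂ} (hψ : cInner ψ ψ = 1) (hφ : cInner φ φ = 1)
    {w : Fin n × Fin u → Fin n × Fin u → ℂ} (hw : IsVNM w)
    (hfix : FixesVNM w (redB (outer ψ) ⊗ₖ redC (outer φ))) :
    hsNormSq (outer ψ ⊗ₖ outer φ - pinchBC w (outer ψ ⊗ₖ outer φ)) =
      1 - (trace ((redB (outer ψ) ⊗ₖ redC (outer φ)) * (redB (outer ψ) ⊗ₖ redC (outer φ)))).re := by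
  set σ := redB (outer ψ) ⊗ₖ redC (outer φ)
  set P := outer ψ ⊗ₖ outer φ with hP
  let Q h := ampMid m v (projOf w h)
  have hproj : OrthogonalIdempotents (projOf w) := IsOrthonormalFamily.orthogonalIdempotents hw
  have hPP : trace (P * P) = 1 := by
    rw [hP, outer_kronecker_outer_mul_self hψ hφ, trace_kronecker, trace_outer, trace_outer, hψ, hφ,
      one_mul]
  have hPpinch : trace (P * pinching Q P) = trace (σ * σ) :=
    calc trace (P * pinching Q P) = ∑ h, trace (Q h * P * (Q h * P)) := trace_mul_pinching Q P
      _ = ∑ h, trace (Q h * P) ^ 2 := sum_congr rfl fun h _ => by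
        rw [hP, outer_kronecker_outer, trace_mul_outer_mul_self]
      _ = ∑ h, trace (projOf w h * σ * (projOf w h * σ)) := sum_congr rfl fun h _ => by
        rw [trace_ampMid_mul_kronecker, projOf, trace_outer_mul_mul_self]
      _ = trace (σ * σ) := by rw [← trace_mul_pinching, show pinching (projOf w) σ = σ from hfix]
  rw [show pinchBC w P = pinching Q P from rfl,
    hsNormSq_sub_pinching hproj.ampMid (fun h => isHermitian_ampMid (isHermitian_outer _))
      ((isHermitian_outer ψ).kronecker (isHermitian_outer φ)), hPP, hPpinch, Complex.sub_re,
    Complex.one_re]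

lemma NHb_eq_of_forall {m n u v : ℕ} {ρAB : Matrix (Fin m × Fin n) (Fin m × Fin n) ℂ}
    {ρCD : Matrix (Fin u × Fin v) (Fin u × Fin v) ℂ} (hAB : ρAB.IsHermitian)
    (hCD : ρCD.IsHermitian) {r : ℝ}
    (h : ∀ w, IsVNM w → FixesVNM w (redB ρAB ⊗ₖ redC ρCD) →
      hsNormSq (psdSqrt (ρAB ⊗ₖ ρCD) - pinchBC w (psdSqrt (ρAB ⊗ₖ ρCD))) = r) :
    NHb ρAB ρCD = r := by
  obtain ⟨w₀, hw₀, hfix₀⟩ :=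
    exists_isVNM_fixesVNM ((isHermitian_redB hAB).kronecker (isHermitian_redC hCD))
  refine (congrArg sSup (Set.eq_singleton_iff_unique_mem.mpr ⟨?_, ?_⟩)).trans (csSup_singleton r)
  · exact ⟨w₀, hw₀, hfix₀, (h w₀ hw₀ hfix₀).symm⟩
  · rintro s ⟨w, hw, hfix, rfl⟩
    exact h w hw hfix

theorem NHb_outer_outer {m n u v : ℕ} {ψ : Fin m × Fin n → ℂ} {φ : Fin u × Fin v → ℂ}
    (hψ : cInner ψ ψ = 1) (hφ : cInner φ φ = 1) :
    NHb (outer ψ) (outer φ) =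
      1 - (trace ((redB (outer ψ) ⊗ₖ redC (outer φ)) * (redB (outer ψ) ⊗ₖ redC (outer φ)))).re := by
  have hsqrt : psdSqrt (outer ψ ⊗ₖ outer φ) = outer ψ ⊗ₖ outer φ :=
    psdSqrt_eq_self_of_mul_self
      ((posSemidef_vecMulVec_self_star ψ).kronecker (posSemidef_vecMulVec_self_star φ))
      (outer_kronecker_outer_mul_self hψ hφ)
  refine NHb_eq_of_forall (isHermitian_outer ψ) (isHermitian_outer φ) fun w hw hfix => ?_
  rw [hsqrt, hsNormSq_kronecker_outer_sub_pinchBC hψ hφ hw hfix]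

theorem stmt0_general {m n u v : ℕ} {ι κ : Type*} [Fintype ι] [Fintype κ] [DecidableEq ι] [DecidableEq κ]
    (ψ : Fin m × Fin n → ℂ) (φ : Fin u × Fin v → ℂ)
    (lam : ι → ℝ) (mu : κ → ℝ)
    (a : ι → Fin m → ℂ) (b : ι → Fin n → ℂ)
    (c : κ → Fin u → ℂ) (d : κ → Fin v → ℂ)
    (ha : ∀ i i', cInner (a i) (a i') = if i = i' then (1 : ℂ) else 0)
    (hb : ∀ i i', cInner (b i) (b i') = if i = i' then (1 : ℂ) else 0)
    (hc : ∀ j j', cInner (c j) (c j') = if j = j' then (1 : ℂ) else 0)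
    (hd : ∀ j j', cInner (d j) (d j') = if j = j' then (1 : ℂ) else 0)
    (hlam1 : ∑ i, lam i ^ 2 = 1) (hmu1 : ∑ j, mu j ^ 2 = 1)
    (hψ : ψ = fun p => ∑ i, (lam i : ℂ) * a i p.1 * b i p.2)
    (hφ : φ = fun p => ∑ j, (mu j : ℂ) * c j p.1 * d j p.2) :
    NHb (outer ψ) (outer φ) = 1 - ∑ i, ∑ j, lam i ^ 4 * mu j ^ 4 := by
  have hb : IsOrthonormalFamily b := hb
  have hc : IsOrthonormalFamily c := hc
  have hρB := redB_outer_of_schmidt ha hψ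
  have hρC := redC_outer_of_schmidt hd hφ
  have hψ1 : cInner ψ ψ = 1 := by
    rw [← trace_outer, ← trace_redB, hρB, hb.trace_sum_smul_outer]
    exact_mod_cast hlam1
  have hφ1 : cInner φ φ = 1 := by
    rw [← trace_outer, ← trace_redC, hρC, hc.trace_sum_smul_outer]
    exact_mod_cast hmu1
  rw [NHb_outer_outer hψ1 hφ1, ← mul_kronecker_mul, trace_kronecker, hρB, hρC,
    hb.sum_smul_outer_mul_self, hc.sum_smul_outer_mul_self, hb.trace_sum_smul_outer,
    hc.trace_sum_smul_outer, sum_mul_sum]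
  norm_cast
  congr 1
  exact sum_congr rfl fun i _ => sum_congr rfl fun j _ => by ring

/-- For pure inputs with Schmidt coefficients λ_i and μ_j,
`N_H^b(ρ_AB ⊗ ρ_CD) = 1 − Σ_{i,j} λ_i⁴ μ_j⁴`. -/
theorem stmt0 {m n u v : ℕ} {ι κ : Type*} [Fintype ι] [Fintype κ] [DecidableEq ι] [DecidableEq κ]
    (ψ : Fin m × Fin n → ℂ) (φ : Fin u × Fin v → ℂ)
    (lam : ι → ℝ) (mu : κ → ℝ)
    (a : ι → Fin m → ℂ) (b : ι → Fin n → ℂ)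
    (c : κ → Fin u → ℂ) (d : κ → Fin v → ℂ)
    (ha : ∀ i i', cInner (a i) (a i') = if i = i' then (1 : ℂ) else 0)
    (hb : ∀ i i', cInner (b i) (b i') = if i = i' then (1 : ℂ) else 0)
    (hc : ∀ j j', cInner (c j) (c j') = if j = j' then (1 : ℂ) else 0)
    (hd : ∀ j j', cInner (d j) (d j') = if j = j' then (1 : ℂ) else 0)
    (hlam : ∀ i, 0 ≤ lam i) (hmu : ∀ j, 0 ≤ mu j)
    (hlam1 : ∑ i, lam i ^ 2 = 1) (hmu1 : ∑ j, mu j ^ 2 = 1)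
    (hψ : ψ = fun p => ∑ i, (lam i : ℂ) * a i p.1 * b i p.2)
    (hφ : φ = fun p => ∑ j, (mu j : ℂ) * c j p.1 * d j p.2) :
    NHb (outer ψ) (outer φ) = 1 - ∑ i, ∑ j, lam i ^ 4 * mu j ^ 4 :=
  stmt0_general ψ φ lam mu a b c d ha hb hc hd hlam1 hmu1 hψ hφ
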